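/- Let 1/p + 1/p̃ = 1/q + 1/q̃ = 1/r, with r ≤ p < ∞, r ≤ q ≤ ∞ and 1 ≤ r < ∞. There is a constant 0 < C < ∞ such that for all measurable functions f, g on ℝ^{1+n}_+, one has ‖fg‖_{L_r(ℝ^{1+n}_+)} ≤ C ‖N_{L_q} f‖_{L_p(ℝ^n)} ‖C^r_{L_{q̃}} g‖_{L_{p̃}(ℝ^n)}. -/

import Mathlib

/-!
Split `‖fg‖_r^r` over the Whitney regions and apply Hölder's inequality on each of them: the
region `W_Q` contributes at most `a_Q c_Q`, where `a_Q = (|W_Q|^{-1/q} ‖f‖_{L_q(W_Q)})^r` is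
at most `N_{L_q} f(x)^r` for every `x ∈ Q`, and `c_Q = |W_Q| (|W_Q|^{-1/q̃} ‖g‖_{L_q̃(W_Q)})^r`
has Carleson box averages `|Q|⁻¹ ∑_{R ⊆ Q} c_R ≤ C^r_{L_q̃} g(x)^r` for `x ∈ Q`.
The dyadic Carleson embedding `∑ a_Q c_Q ≤ ∫ (N_{L_q} f)^r (C^r_{L_q̃} g)^r` follows from the
layer-cake formula: the cubes with `a_Q > t` lie in `{(N_{L_q} f)^r > t}`, and the maximal ones
among them are disjoint. Hölder's inequality with exponents `p/r` and `p̃/r` concludes, with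
`C = 1`.
-/

open MeasureTheory ENNReal

noncomputable section

/-- Index set for dyadic cubes in `ℝⁿ`: scale `j : ℤ` and position `k : ℤⁿ`. -/
abbrev DIdx (n : ℕ) := ℤ × (Fin n → ℤ)

/-- The open dyadic cube `2⁻ʲ(0,1)ⁿ + 2⁻ʲ k`; its sidelength is `2⁻ʲ`. -/
def dcube (n : ℕ) (Q : DIdx n) : Set (EuclideanSpace ℝ (Fin n)) :=
  {x | ∀ i, (2:ℝ) ^ (-Q.1) * (Q.2 i : ℝ) < x i ∧ x i < (2:ℝ) ^ (-Q.1) * ((Q.2 i : ℝ) + 1)}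

/-- The dyadic Whitney region `W_Q = (ℓ(Q)/2, ℓ(Q)) × Q` in the half-space. -/
def whit (n : ℕ) (Q : DIdx n) : Set (ℝ × EuclideanSpace ℝ (Fin n)) :=
  Set.Ioo ((2:ℝ) ^ (-Q.1) / 2) ((2:ℝ) ^ (-Q.1)) ×ˢ dcube n Q

/-- The upper half-space `ℝ^{1+n}_+`. -/
def halfSpace (n : ℕ) : Set (ℝ × EuclideanSpace ℝ (Fin n)) := {w | 0 < w.1}

/-- The `L_p` norm (valued in `ℝ≥0∞`) of an `ℝ≥0∞`-valued function. -/
def eLp {α : Type*} [MeasurableSpace α] (p : ℝ≥0∞) (F : α → ℝ≥0∞) (μ : Measure α) : ℝ≥0∞ :=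
  if p = ∞ then essSup F μ else (∫⁻ x, F x ^ p.toReal ∂μ) ^ p.toReal⁻¹

/-- The dyadic non-tangential maximal function
`N_{L_q} f(x) = sup_{Q ∋ x} |W_Q|^{-1/q} ‖f‖_{L_q(W_Q)}`. -/
def NLq (n : ℕ) (q : ℝ≥0∞) (f : ℝ × EuclideanSpace ℝ (Fin n) → ℝ)
    (x : EuclideanSpace ℝ (Fin n)) : ℝ≥0∞ :=
  ⨆ Q, ⨆ (_ : x ∈ dcube n Q),
    volume (whit n Q) ^ (-(1/q).toReal) * eLpNorm f q (volume.restrict (whit n Q))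

/-- The dyadic Carleson functional
`C^r_{L_q} g(x) = sup_{Q ∋ x} (|Q|⁻¹ ∑_{R ⊆ Q} |W_R| (|W_R|^{-1/q} ‖g‖_{L_q(W_R)})^r)^{1/r}`. -/
def CrLq (n : ℕ) (r q : ℝ≥0∞) (g : ℝ × EuclideanSpace ℝ (Fin n) → ℝ)
    (x : EuclideanSpace ℝ (Fin n)) : ℝ≥0∞ :=
  ⨆ Q, ⨆ (_ : x ∈ dcube n Q),
    ((volume (dcube n Q))⁻¹ *
      ∑' R : {R : DIdx n // dcube n R ⊆ dcube n Q},
        volume (whit n R.1) *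
          (volume (whit n R.1) ^ (-(1/q).toReal) *
            eLpNorm g q (volume.restrict (whit n R.1))) ^ r.toReal) ^ r.toReal⁻¹

section DyadicCubes

variable {n : ℕ}

lemma measurableSet_dcube (Q : DIdx n) : MeasurableSet (dcube n Q) := by
  have : dcube n Q = ⋂ i, (fun x : EuclideanSpace ℝ (Fin n) => x i) ⁻¹'
      Set.Ioo ((2:ℝ) ^ (-Q.1) * Q.2 i) ((2:ℝ) ^ (-Q.1) * (Q.2 i + 1)) := by
    ext x
    simp [dcube]
  rw [this]
  exact MeasurableSet.iInter fun i =>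
    (measurable_pi_apply i).comp (MeasurableEquiv.toLp 2 (Fin n → ℝ)).symm.measurable
      measurableSet_Ioo

lemma measurableSet_whit (Q : DIdx n) : MeasurableSet (whit n Q) :=
  measurableSet_Ioo.prod (measurableSet_dcube Q)

lemma volume_dcube (Q : DIdx n) :
    volume (dcube n Q) = ENNReal.ofReal ((2:ℝ) ^ (-Q.1)) ^ n := by
  have : dcube n Q = (MeasurableEquiv.toLp 2 (Fin n → ℝ)).symm ⁻¹'
      Set.univ.pi fun i => Set.Ioo ((2:ℝ) ^ (-Q.1) * Q.2 i) ((2:ℝ) ^ (-Q.1) * (Q.2 i + 1)) := by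
    ext x
    simp [dcube, MeasurableEquiv.coe_toLp_symm]
  rw [this, (EuclideanSpace.volume_preserving_symm_measurableEquiv_toLp (Fin n)).measure_preimage
    (MeasurableSet.univ_pi fun _ => measurableSet_Ioo).nullMeasurableSet, volume_pi_pi]
  simp_rw [Real.volume_Ioo, mul_add, mul_one, add_sub_cancel_left, Finset.prod_const,
    Finset.card_univ, Fintype.card_fin]

lemma volume_dcube_ne_zero (Q : DIdx n) : volume (dcube n Q) ≠ 0 := by
  rw [volume_dcube]
  exact pow_ne_zero _ (ENNReal.ofReal_pos.2 (by positivity)).ne'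

lemma volume_dcube_ne_top (Q : DIdx n) : volume (dcube n Q) ≠ ∞ := by
  rw [volume_dcube]
  exact pow_ne_top ofReal_ne_top

lemma volume_whit (Q : DIdx n) :
    volume (whit n Q) = ENNReal.ofReal ((2:ℝ) ^ (-Q.1) / 2) * volume (dcube n Q) := by
  rw [whit, Measure.volume_eq_prod, Measure.prod_prod, Real.volume_Ioo]
  congr 2
  ring

lemma volume_whit_ne_zero (Q : DIdx n) : volume (whit n Q) ≠ 0 := by
  rw [volume_whit]
  exact mul_ne_zero (ENNReal.ofReal_pos.2 (by positivity)).ne' (volume_dcube_ne_zero Q)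

lemma volume_whit_ne_top (Q : DIdx n) : volume (whit n Q) ≠ ∞ := by
  rw [volume_whit]
  exact mul_ne_top ofReal_ne_top (volume_dcube_ne_top Q)

lemma le_and_add_one_le_of_mem_Ioo {c t : ℝ} (hc : 0 < c) {N k₁ k₂ : ℤ}
    (h₁ : t ∈ Set.Ioo (c * k₁) (c * (k₁ + 1)))
    (h₂ : t ∈ Set.Ioo (c * N * k₂) (c * N * (k₂ + 1))) :
    N * k₂ ≤ k₁ ∧ k₁ + 1 ≤ N * (k₂ + 1) := by
  have hlt₁ : ((N * k₂ : ℤ) : ℝ) < k₁ + 1 := by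
    refine (mul_lt_mul_iff_right₀ hc).1 ?_
    push_cast
    linarith [h₁.2, h₂.1]
  have hlt₂ : (k₁ : ℝ) < ((N * (k₂ + 1) : ℤ) : ℝ) := by
    refine (mul_lt_mul_iff_right₀ hc).1 ?_
    push_cast
    linarith [h₁.1, h₂.2]
  constructor
  · exact Int.lt_add_one_iff.1 (by exact_mod_cast hlt₁)
  · exact_mod_cast hlt₂

lemma Ioo_subset_Ioo_of_mem {c t : ℝ} (hc : 0 < c) {N k₁ k₂ : ℤ}
    (h₁ : t ∈ Set.Ioo (c * k₁) (c * (k₁ + 1)))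
    (h₂ : t ∈ Set.Ioo (c * N * k₂) (c * N * (k₂ + 1))) :
    Set.Ioo (c * k₁) (c * (k₁ + 1)) ⊆ Set.Ioo (c * N * k₂) (c * N * (k₂ + 1)) := by
  obtain ⟨hlo, hhi⟩ := le_and_add_one_le_of_mem_Ioo hc h₁ h₂
  refine Set.Ioo_subset_Ioo ?_ ?_
  · rw [mul_assoc]
    exact mul_le_mul_of_nonneg_left (by exact_mod_cast hlo) hc.le
  · rw [mul_assoc]
    exact mul_le_mul_of_nonneg_left (by exact_mod_cast hhi) hc.le

lemma dcube_subset_of_le {Q R : DIdx n} (hQR : R.1 ≤ Q.1)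
    (h : (dcube n Q ∩ dcube n R).Nonempty) : dcube n Q ⊆ dcube n R := by
  obtain ⟨t, htQ, htR⟩ := h
  have hscale : (2:ℝ) ^ (-R.1) = 2 ^ (-Q.1) * ((2 ^ (Q.1 - R.1).toNat : ℤ) : ℝ) := by
    rw [Int.cast_pow, Int.cast_ofNat, ← zpow_natCast, Int.toNat_of_nonneg (by omega),
      ← zpow_add₀ two_ne_zero]
    ring_nf
  intro x hx i
  have hRi := htR i
  rw [hscale] at hRi ⊢
  exact Ioo_subset_Ioo_of_mem (by positivity) (htQ i) hRi (hx i)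

lemma eq_of_fst_eq_of_inter_nonempty {Q R : DIdx n} (hQR : Q.1 = R.1)
    (h : (dcube n Q ∩ dcube n R).Nonempty) : Q = R := by
  obtain ⟨t, htQ, htR⟩ := h
  refine Prod.ext hQR (funext fun i => ?_)
  have hQi : t i ∈ Set.Ioo ((2:ℝ) ^ (-R.1) * (Q.2 i)) (2 ^ (-R.1) * (Q.2 i + 1)) :=
    hQR ▸ htQ i
  have hRi : t i ∈ Set.Ioo ((2:ℝ) ^ (-R.1) * ((1 : ℤ) : ℝ) * (R.2 i))
      (2 ^ (-R.1) * ((1 : ℤ) : ℝ) * (R.2 i + 1)) := by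
    simpa using htR i
  have := le_and_add_one_le_of_mem_Ioo (by positivity) hQi hRi
  omega

end DyadicCubes

section WhitneyDecomposition

variable {n : ℕ}

lemma mem_Ioo_floor_of_ne {c y : ℝ} (hc : 0 < c) (hy : ∀ m : ℤ, y ≠ c * m) :
    y ∈ Set.Ioo (c * ⌊y / c⌋) (c * (⌊y / c⌋ + 1)) := by
  have hlo : c * ⌊y / c⌋ ≤ y := by
    have := Int.floor_le (y / c)
    rwa [le_div_iff₀ hc, mul_comm] at this
  have hhi : y < c * (⌊y / c⌋ + 1) := by
    have := Int.lt_floor_add_one (y / c)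
    rwa [div_lt_iff₀ hc, mul_comm] at this
  exact ⟨lt_of_le_of_ne hlo (hy _).symm, hhi⟩

lemma mem_iUnion_whit_of_ne {w : ℝ × EuclideanSpace ℝ (Fin n)} (hw : 0 < w.1)
    (h₁ : ∀ j : ℤ, w.1 ≠ 2 ^ j) (h₂ : ∀ (i : Fin n) (j m : ℤ), w.2 i ≠ 2 ^ j * m) :
    w ∈ ⋃ Q, whit n Q := by
  obtain ⟨j, hjlo, hjhi⟩ := exists_mem_Ico_zpow hw one_lt_two
  refine Set.mem_iUnion.2 ⟨(-(j + 1), fun i => ⌊w.2 i / 2 ^ (j + 1)⌋), ?_, fun i => ?_⟩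
  · rw [neg_neg, zpow_add_one₀ two_ne_zero, mul_div_cancel_right₀ _ two_ne_zero,
      ← zpow_add_one₀ two_ne_zero]
    exact ⟨lt_of_le_of_ne hjlo (h₁ j).symm, hjhi⟩
  · simp only [neg_neg]
    exact mem_Ioo_floor_of_ne (by positivity) (h₂ i (j + 1))

/-- The exceptional null set consists of the points with a dyadic coordinate. -/
lemma halfSpace_ae_le_iUnion_whit : halfSpace n ≤ᵐ[volume] ⋃ Q, whit n Q := by
  have h₁ : ∀ᵐ w : ℝ × EuclideanSpace ℝ (Fin n), ∀ j : ℤ, w.1 ≠ 2 ^ j :=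
    ae_all_iff.2 fun j => Measure.quasiMeasurePreserving_fst.ae (Measure.ae_ne volume _)
  have h₂ : ∀ᵐ w : ℝ × EuclideanSpace ℝ (Fin n), ∀ (i : Fin n) (j m : ℤ), w.2 i ≠ 2 ^ j * m :=
    ae_all_iff.2 fun i => ae_all_iff.2 fun j => ae_all_iff.2 fun m =>
      Measure.quasiMeasurePreserving_snd.ae <|
        (EuclideanSpace.volume_preserving_symm_measurableEquiv_toLp
          (Fin n)).quasiMeasurePreserving.ae <|
          (Measure.quasiMeasurePreserving_eval _ i).ae (Measure.ae_ne volume _)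
  filter_upwards [h₁, h₂] with w hw₁ hw₂ hw
  exact mem_iUnion_whit_of_ne hw hw₁ hw₂

lemma lintegral_halfSpace_le_tsum_whit (F : ℝ × EuclideanSpace ℝ (Fin n) → ℝ≥0∞) :
    ∫⁻ w in halfSpace n, F w ≤ ∑' Q, ∫⁻ w in whit n Q, F w :=
  (lintegral_mono' (Measure.restrict_mono_ae halfSpace_ae_le_iUnion_whit) le_rfl).trans
    (lintegral_iUnion_le _ _)

end WhitneyDecomposition

section CarlesonEmbedding

variable {n : ℕ}

def carlesonAvg (c : DIdx n → ℝ≥0∞) (P : DIdx n) : ℝ≥0∞ :=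
  (volume (dcube n P))⁻¹ * ∑' R : {R : DIdx n // dcube n R ⊆ dcube n P}, c R.1

variable {c : DIdx n → ℝ≥0∞} {k : EuclideanSpace ℝ (Fin n) → ℝ≥0∞}

lemma tsum_le_setLIntegral_dcube {P : DIdx n} (hk : ∀ x ∈ dcube n P, carlesonAvg c P ≤ k x) :
    ∑' R : {R : DIdx n // dcube n R ⊆ dcube n P}, c R.1 ≤ ∫⁻ x in dcube n P, k x := by
  calc ∑' R : {R : DIdx n // dcube n R ⊆ dcube n P}, c R.1
      = ∫⁻ _ in dcube n P, carlesonAvg c P := by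
        rw [setLIntegral_const, carlesonAvg, mul_comm, ← mul_assoc,
          ENNReal.mul_inv_cancel (volume_dcube_ne_zero P) (volume_dcube_ne_top P), one_mul]
    _ ≤ ∫⁻ x in dcube n P, k x := setLIntegral_mono' (measurableSet_dcube P) hk

/-- Selecting from a finite family the cubes of least scale among those of the family
containing them yields pairwise disjoint cubes covering the family; on each of them the
Carleson condition applies. (Scale, not inclusion: for `n = 0` all cubes coincide.) -/
lemma sum_le_setLIntegral_of_carlesonAvg_le (hk : ∀ P, ∀ x ∈ dcube n P, carlesonAvg c P ≤ k x)
    {Ω : Set (EuclideanSpace ℝ (Fin n))} {s : Finset (DIdx n)} (hs : ∀ Q ∈ s, dcube n Q ⊆ Ω) :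
    ∑ Q ∈ s, c Q ≤ ∫⁻ x in Ω, k x := by
  classical
  set M := s.filter fun P => ∀ P' ∈ s, dcube n P ⊆ dcube n P' → P.1 ≤ P'.1
  have hcover : ∀ Q ∈ s, ∃ P ∈ M, dcube n Q ⊆ dcube n P := by
    intro Q hQ
    obtain ⟨P, hP, hmin⟩ := (s.filter fun P => dcube n Q ⊆ dcube n P).exists_min_image
      Prod.fst ⟨Q, Finset.mem_filter.2 ⟨hQ, subset_rfl⟩⟩
    obtain ⟨hPs, hQP⟩ := Finset.mem_filter.1 hP
    refine ⟨P, Finset.mem_filter.2 ⟨hPs, fun P' hP's hPP' => ?_⟩, hQP⟩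
    exact hmin P' (Finset.mem_filter.2 ⟨hP's, hQP.trans hPP'⟩)
  have hdisj : (M : Set (DIdx n)).PairwiseDisjoint (dcube n) := by
    intro P₁ hP₁ P₂ hP₂ hne
    rw [Function.onFun, Set.disjoint_iff_inter_eq_empty, ← Set.not_nonempty_iff_eq_empty]
    intro hint
    obtain ⟨hP₁s, hP₁min⟩ := Finset.mem_filter.1 hP₁
    obtain ⟨hP₂s, hP₂min⟩ := Finset.mem_filter.1 hP₂
    refine hne (eq_of_fst_eq_of_inter_nonempty (le_antisymm ?_ ?_) hint)
    · rcases le_total P₂.1 P₁.1 with h | h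
      · exact hP₁min P₂ hP₂s (dcube_subset_of_le h hint)
      · exact h
    · rcases le_total P₁.1 P₂.1 with h | h
      · exact hP₂min P₁ hP₁s (dcube_subset_of_le h (Set.inter_comm _ _ ▸ hint))
      · exact h
  calc ∑ Q ∈ s, c Q
      ≤ ∑ Q ∈ s, ∑ P ∈ M, {R | dcube n R ⊆ dcube n P}.indicator c Q := by
        refine Finset.sum_le_sum fun Q hQ => ?_
        obtain ⟨P, hPM, hQP⟩ := hcover Q hQ
        calc c Q = {R | dcube n R ⊆ dcube n P}.indicator c Q := (Set.indicator_of_mem hQP c).symm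
          _ ≤ _ := Finset.single_le_sum (f := fun P => {R | dcube n R ⊆ dcube n P}.indicator c Q)
              (fun _ _ => zero_le) hPM
    _ = ∑ P ∈ M, ∑ Q ∈ s, {R | dcube n R ⊆ dcube n P}.indicator c Q := Finset.sum_comm
    _ ≤ ∑ P ∈ M, ∑' R : {R : DIdx n // dcube n R ⊆ dcube n P}, c R.1 :=
        Finset.sum_le_sum fun P _ => (ENNReal.sum_le_tsum s).trans_eq (tsum_subtype _ c).symm
    _ ≤ ∑ P ∈ M, ∫⁻ x in dcube n P, k x :=
        Finset.sum_le_sum fun P _ => tsum_le_setLIntegral_dcube (hk P)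
    _ = ∫⁻ x in ⋃ P ∈ M, dcube n P, k x :=
        (lintegral_biUnion_finset hdisj (fun P _ => measurableSet_dcube P) k).symm
    _ ≤ ∫⁻ x in Ω, k x :=
        lintegral_mono_set (Set.iUnion₂_subset fun P hP => hs P (Finset.mem_filter.1 hP).1)

theorem tsum_indicator_le_setLIntegral_of_carlesonAvg_le
    (hk : ∀ P, ∀ x ∈ dcube n P, carlesonAvg c P ≤ k x)
    {Ω : Set (EuclideanSpace ℝ (Fin n))} {S : Set (DIdx n)} (hS : ∀ Q ∈ S, dcube n Q ⊆ Ω) :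
    ∑' Q, S.indicator c Q ≤ ∫⁻ x in Ω, k x := by
  classical
  rw [ENNReal.tsum_eq_iSup_sum]
  refine iSup_le fun s => ?_
  rw [Finset.sum_indicator_eq_sum_filter]
  exact sum_le_setLIntegral_of_carlesonAvg_le hk fun Q hQ => hS Q (Finset.mem_filter.1 hQ).2

end CarlesonEmbedding

section LayerCake

def layerSet (a : ℝ≥0∞) : Set ℝ := {t | 0 < t ∧ ENNReal.ofReal t < a}

lemma measurableSet_layerSet (a : ℝ≥0∞) : MeasurableSet (layerSet a) :=
  measurableSet_Ioi.inter (ENNReal.measurable_ofReal measurableSet_Iio)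

lemma volume_layerSet (a : ℝ≥0∞) : volume (layerSet a) = a := by
  rcases eq_or_ne a ∞ with rfl | ha
  · have : layerSet ∞ = Set.Ioi 0 := by ext t; simp [layerSet]
    rw [this, Real.volume_Ioi]
  · have : layerSet a = Set.Ioo 0 a.toReal := by
      ext t
      exact and_congr_right fun ht => ENNReal.ofReal_lt_iff_lt_toReal ht.le ha
    rw [this, Real.volume_Ioo, sub_zero, ENNReal.ofReal_toReal ha]

lemma layerSet_mono {a b : ℝ≥0∞} (hab : a ≤ b) : layerSet a ⊆ layerSet b :=
  fun _ ht => ⟨ht.1, ht.2.trans_le hab⟩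

lemma measurableSet_setOf_mem_layerSet {α : Type*} [MeasurableSpace α] {h : α → ℝ≥0∞}
    (hh : Measurable h) : MeasurableSet {p : ℝ × α | p.1 ∈ layerSet (h p.2)} :=
  (measurable_fst measurableSet_Ioi).inter
    (measurableSet_lt measurable_fst.ennreal_ofReal (hh.comp measurable_snd))

lemma mul_eq_lintegral_indicator_layerSet (a c : ℝ≥0∞) :
    a * c = ∫⁻ t, (layerSet a).indicator (fun _ => c) t := by
  rw [lintegral_indicator_const (measurableSet_layerSet a), volume_layerSet, mul_comm]

end LayerCake

section WeightedCarlesonEmbedding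

variable {n : ℕ}

/-- Dyadic Carleson embedding: by the layer-cake formula it suffices to bound, for each level
`t`, the coefficients of the cubes where `a > t`; these cubes lie in `{h > t}`. -/
theorem tsum_mul_le_lintegral_mul {a c : DIdx n → ℝ≥0∞} {h k : EuclideanSpace ℝ (Fin n) → ℝ≥0∞}
    (hh : Measurable h) (hk_meas : Measurable k) (ha : ∀ Q, ∀ x ∈ dcube n Q, a Q ≤ h x)
    (hk : ∀ P, ∀ x ∈ dcube n P, carlesonAvg c P ≤ k x) :
    ∑' Q, a Q * c Q ≤ ∫⁻ x, h x * k x := by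
  have hU := measurableSet_setOf_mem_layerSet hh
  calc ∑' Q, a Q * c Q
      = ∑' Q, ∫⁻ t, (layerSet (a Q)).indicator (fun _ => c Q) t :=
        tsum_congr fun Q => mul_eq_lintegral_indicator_layerSet _ _
    _ = ∫⁻ t, ∑' Q, (layerSet (a Q)).indicator (fun _ => c Q) t :=
        (lintegral_tsum fun Q =>
          (measurable_const.indicator (measurableSet_layerSet _)).aemeasurable).symm
    _ ≤ ∫⁻ t, ∫⁻ x, (layerSet (h x)).indicator (fun _ => k x) t := by
        refine lintegral_mono fun t => ?_
        have hΩ : MeasurableSet {x | t ∈ layerSet (h x)} := measurable_prodMk_left hU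
        calc ∑' Q, (layerSet (a Q)).indicator (fun _ => c Q) t
            = ∑' Q, {Q | t ∈ layerSet (a Q)}.indicator c Q := rfl
          _ ≤ ∫⁻ x in {x | t ∈ layerSet (h x)}, k x :=
              tsum_indicator_le_setLIntegral_of_carlesonAvg_le hk fun Q hQ x hx =>
                layerSet_mono (ha Q x hx) hQ
          _ = ∫⁻ x, (layerSet (h x)).indicator (fun _ => k x) t := (lintegral_indicator hΩ k).symm
    _ = ∫⁻ x, ∫⁻ t, (layerSet (h x)).indicator (fun _ => k x) t :=
        lintegral_lintegral_swap ((hk_meas.comp measurable_snd).indicator hU).aemeasurable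
    _ = ∫⁻ x, h x * k x :=
        lintegral_congr fun x => (mul_eq_lintegral_indicator_layerSet _ _).symm

end WeightedCarlesonEmbedding

section Holder

variable {α : Type*} [MeasurableSpace α] {μ : Measure α}

def avgLpNorm {E : Type*} [NormedAddCommGroup E] (μ : Measure α) (S : Set α) (q : ℝ≥0∞)
    (f : α → E) : ℝ≥0∞ :=
  μ S ^ (-(1/q).toReal) * eLpNorm f q (μ.restrict S)

lemma eLpNorm_restrict_eq_rpow_mul_avgLpNorm {E : Type*} [NormedAddCommGroup E] {S : Set α}
    (hS₀ : μ S ≠ 0) (hS : μ S ≠ ∞) (q : ℝ≥0∞) (f : α → E) :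
    eLpNorm f q (μ.restrict S) = μ S ^ (1/q).toReal * avgLpNorm μ S q f := by
  rw [avgLpNorm, ← mul_assoc, ← ENNReal.rpow_add _ _ hS₀ hS, add_neg_cancel, ENNReal.rpow_zero,
    one_mul]

theorem setLIntegral_enorm_mul_rpow_le {S : Set α} (hS₀ : μ S ≠ 0) (hS : μ S ≠ ∞)
    {q q' r : ℝ≥0∞} [HolderTriple q q' r] (hr₀ : r ≠ 0) (hr : r ≠ ∞) {f g : α → ℝ}
    (hf : AEStronglyMeasurable f (μ.restrict S)) (hg : AEStronglyMeasurable g (μ.restrict S)) :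
    ∫⁻ w in S, ‖f w * g w‖ₑ ^ r.toReal ∂μ ≤
      μ S * (avgLpNorm μ S q f * avgLpNorm μ S q' g) ^ r.toReal := by
  have hρ : 0 < r.toReal := ENNReal.toReal_pos hr₀ hr
  have hq₀ : q ≠ 0 := ((zero_lt_iff.2 hr₀).trans_le (HolderTriple.le q q' r)).ne'
  have hq'₀ : q' ≠ 0 := ((zero_lt_iff.2 hr₀).trans_le (HolderTriple.le q' q r)).ne'
  have hexp : (1/q).toReal + (1/q').toReal = r.toReal⁻¹ := by
    rw [← ENNReal.toReal_add (by simpa using hq₀) (by simpa using hq'₀),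
      HolderTriple.one_div_add_one_div q q' r, one_div, ENNReal.toReal_inv]
  calc ∫⁻ w in S, ‖f w * g w‖ₑ ^ r.toReal ∂μ
      = eLpNorm (f • g) r (μ.restrict S) ^ r.toReal := by
        rw [lintegral_rpow_enorm_eq_rpow_eLpNorm' hρ, ← eLpNorm_eq_eLpNorm' hr₀ hr]
        rfl
    _ ≤ (eLpNorm f q (μ.restrict S) * eLpNorm g q' (μ.restrict S)) ^ r.toReal :=
        ENNReal.rpow_le_rpow (eLpNorm_smul_le_mul_eLpNorm hg hf) hρ.le
    _ = (μ S ^ r.toReal⁻¹ * (avgLpNorm μ S q f * avgLpNorm μ S q' g)) ^ r.toReal := by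
        rw [eLpNorm_restrict_eq_rpow_mul_avgLpNorm hS₀ hS,
          eLpNorm_restrict_eq_rpow_mul_avgLpNorm hS₀ hS,
          mul_mul_mul_comm, ← ENNReal.rpow_add _ _ hS₀ hS, hexp]
    _ = μ S * (avgLpNorm μ S q f * avgLpNorm μ S q' g) ^ r.toReal := by
        rw [ENNReal.mul_rpow_of_nonneg _ _ hρ.le, ← ENNReal.rpow_mul, inv_mul_cancel₀ hρ.ne',
          ENNReal.rpow_one]

theorem lintegral_mul_rpow_le_eLp_mul_eLp {p p' r : ℝ≥0∞} [HolderTriple p p' r] (hr₀ : r ≠ 0)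
    (hp : p ≠ ∞) {F G : α → ℝ≥0∞} (hF : AEMeasurable F μ) (hG : AEMeasurable G μ) :
    (∫⁻ x, (F * G) x ^ r.toReal ∂μ) ^ (1 / r.toReal) ≤ eLp p F μ * eLp p' G μ := by
  have hrp : r ≤ p := HolderTriple.le p p' r
  have hρ : 0 < r.toReal := ENNReal.toReal_pos hr₀ (ne_top_of_le_ne_top hp hrp)
  rcases eq_or_ne p' ∞ with rfl | hp'
  · obtain rfl : r = p := HolderTriple.unique p ∞ r p
    rw [eLp, eLp, if_neg hp, if_pos rfl, one_div]
    calc (∫⁻ x, (F * G) x ^ r.toReal ∂μ) ^ r.toReal⁻¹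
        ≤ (∫⁻ x, F x ^ r.toReal * essSup G μ ^ r.toReal ∂μ) ^ r.toReal⁻¹ := by
          gcongr ?_ ^ _
          refine lintegral_mono_ae ((ENNReal.ae_le_essSup G).mono fun x hx => ?_)
          rw [Pi.mul_apply, ENNReal.mul_rpow_of_nonneg _ _ hρ.le]
          gcongr
      _ = (∫⁻ x, F x ^ r.toReal ∂μ) ^ r.toReal⁻¹ * essSup G μ := by
          rw [lintegral_mul_const'' _ (hF.pow_const _),
            ENNReal.mul_rpow_of_nonneg _ _ (by positivity),
            ← ENNReal.rpow_mul, mul_inv_cancel₀ hρ.ne', ENNReal.rpow_one]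
  · have hp'₀ : p' ≠ 0 := ((zero_lt_iff.2 hr₀).trans_le (HolderTriple.le p' p r)).ne'
    have hp₀ : p ≠ 0 := ((zero_lt_iff.2 hr₀).trans_le hrp).ne'
    have hinv : r⁻¹ = p⁻¹ + p'⁻¹ := HolderTriple.inv_eq p p' r
    have hrlt : r < p := by
      rw [← ENNReal.inv_lt_inv, hinv]
      exact ENNReal.lt_add_right (ENNReal.inv_ne_top.2 hp₀) (ENNReal.inv_ne_zero.2 hp')
    have hexp : 1 / r.toReal = 1 / p.toReal + 1 / p'.toReal := by
      simp only [one_div, ← ENNReal.toReal_inv, hinv]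
      exact ENNReal.toReal_add (ENNReal.inv_ne_top.2 hp₀) (ENNReal.inv_ne_top.2 hp'₀)
    rw [eLp, eLp, if_neg hp, if_neg hp', ← one_div, ← one_div]
    exact ENNReal.lintegral_Lp_mul_le_Lq_mul_Lr hρ
      ((ENNReal.toReal_lt_toReal (ne_top_of_lt hrlt) hp).2 hrlt) hexp μ hF hG

end Holder

section MaximalFunctions

variable {n : ℕ}

lemma measurable_iSup_mem_dcube (A : DIdx n → ℝ≥0∞) :
    Measurable fun x : EuclideanSpace ℝ (Fin n) => ⨆ Q, ⨆ (_ : x ∈ dcube n Q), A Q := by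
  refine Measurable.iSup fun Q => ?_
  have : (fun x => ⨆ (_ : x ∈ dcube n Q), A Q) = (dcube n Q).indicator fun _ => A Q := by
    funext x
    by_cases hx : x ∈ dcube n Q <;> simp [hx]
  rw [this]
  exact measurable_const.indicator (measurableSet_dcube Q)

lemma measurable_NLq (q : ℝ≥0∞) (f : ℝ × EuclideanSpace ℝ (Fin n) → ℝ) :
    Measurable (NLq n q f) :=
  measurable_iSup_mem_dcube _

lemma measurable_CrLq (r q : ℝ≥0∞) (g : ℝ × EuclideanSpace ℝ (Fin n) → ℝ) :
    Measurable (CrLq n r q g) :=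
  measurable_iSup_mem_dcube _

lemma avgLpNorm_le_NLq {q : ℝ≥0∞} {f : ℝ × EuclideanSpace ℝ (Fin n) → ℝ} {Q : DIdx n}
    {x : EuclideanSpace ℝ (Fin n)} (hx : x ∈ dcube n Q) :
    avgLpNorm volume (whit n Q) q f ≤ NLq n q f x :=
  le_iSup₂ (f := fun Q (_ : x ∈ dcube n Q) => avgLpNorm volume (whit n Q) q f) Q hx

lemma carlesonAvg_le_CrLq_rpow {r q : ℝ≥0∞} (hr₀ : r ≠ 0) (hr : r ≠ ∞)
    {g : ℝ × EuclideanSpace ℝ (Fin n) → ℝ} {P : DIdx n} {x : EuclideanSpace ℝ (Fin n)}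
    (hx : x ∈ dcube n P) :
    carlesonAvg (fun R => volume (whit n R) * avgLpNorm volume (whit n R) q g ^ r.toReal) P ≤
      CrLq n r q g x ^ r.toReal := by
  set c := fun R => volume (whit n R) * avgLpNorm volume (whit n R) q g ^ r.toReal
  have hρ : 0 < r.toReal := ENNReal.toReal_pos hr₀ hr
  have hle : carlesonAvg c P ^ r.toReal⁻¹ ≤ CrLq n r q g x :=
    le_iSup₂ (f := fun P (_ : x ∈ dcube n P) => carlesonAvg c P ^ r.toReal⁻¹) P hx
  calc carlesonAvg c P = (carlesonAvg c P ^ r.toReal⁻¹) ^ r.toReal := by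
        rw [← ENNReal.rpow_mul, inv_mul_cancel₀ hρ.ne', ENNReal.rpow_one]
    _ ≤ CrLq n r q g x ^ r.toReal := ENNReal.rpow_le_rpow hle hρ.le

end MaximalFunctions

theorem stmt3_general (n : ℕ) (p ptil q qtil r : ℝ≥0∞)
    (hr1 : 1 ≤ r) (hrtop : r ≠ ∞) (hptop : p ≠ ∞)
    (hpconj : 1/p + 1/ptil = 1/r) (hqconj : 1/q + 1/qtil = 1/r) :
    ∃ C : ℝ, 0 < C ∧
      ∀ f g : ℝ × EuclideanSpace ℝ (Fin n) → ℝ, Measurable f → Measurable g →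
        eLpNorm (fun w => f w * g w) r (volume.restrict (halfSpace n)) ≤
          ENNReal.ofReal C * eLp p (NLq n q f) volume * eLp ptil (CrLq n r qtil g) volume := by
  have hr₀ : r ≠ 0 := (zero_lt_one.trans_le hr1).ne'
  have : HolderTriple p ptil r := ⟨by simpa only [one_div] using hpconj⟩
  have : HolderTriple q qtil r := ⟨by simpa only [one_div] using hqconj⟩
  refine ⟨1, one_pos, fun f g hf hg => ?_⟩
  set a := fun Q => avgLpNorm volume (whit n Q) q f ^ r.toReal
  set c := fun Q => volume (whit n Q) * avgLpNorm volume (whit n Q) qtil g ^ r.toReal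
  rw [ENNReal.ofReal_one, one_mul, eLpNorm_eq_lintegral_rpow_enorm_toReal hr₀ hrtop]
  calc (∫⁻ w in halfSpace n, ‖f w * g w‖ₑ ^ r.toReal) ^ (1 / r.toReal)
      ≤ (∑' Q, a Q * c Q) ^ (1 / r.toReal) := by
        gcongr
        refine (lintegral_halfSpace_le_tsum_whit _).trans (ENNReal.tsum_le_tsum fun Q => ?_)
        refine (setLIntegral_enorm_mul_rpow_le (q := q) (q' := qtil) (volume_whit_ne_zero Q)
          (volume_whit_ne_top Q) hr₀ hrtop hf.aestronglyMeasurable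
          hg.aestronglyMeasurable).trans_eq ?_
        rw [ENNReal.mul_rpow_of_nonneg _ _ ENNReal.toReal_nonneg]
        ring
    _ ≤ (∫⁻ x, NLq n q f x ^ r.toReal * CrLq n r qtil g x ^ r.toReal) ^ (1 / r.toReal) := by
        gcongr
        exact tsum_mul_le_lintegral_mul ((measurable_NLq q f).pow_const _)
          ((measurable_CrLq r qtil g).pow_const _)
          (fun Q x hx => ENNReal.rpow_le_rpow (avgLpNorm_le_NLq hx) ENNReal.toReal_nonneg)
          (fun P x hx => carlesonAvg_le_CrLq_rpow hr₀ hrtop hx)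
    _ = (∫⁻ x, (NLq n q f * CrLq n r qtil g) x ^ r.toReal) ^ (1 / r.toReal) := by
        simp_rw [Pi.mul_apply, ENNReal.mul_rpow_of_nonneg _ _ ENNReal.toReal_nonneg]
    _ ≤ eLp p (NLq n q f) volume * eLp ptil (CrLq n r qtil g) volume :=
        lintegral_mul_rpow_le_eLp_mul_eLp hr₀ hptop (measurable_NLq q f).aemeasurable
          (measurable_CrLq r qtil g).aemeasurable

/-- Corollary 2.3(i): `‖fg‖_{L_r} ≤ C ‖N_{L_q} f‖_{L_p} ‖C^r_{L_q̃} g‖_{L_p̃}`. -/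
theorem stmt3 (n : ℕ) (p ptil q qtil r : ℝ≥0∞)
    (hr1 : 1 ≤ r) (hrtop : r ≠ ∞) (hrp : r ≤ p) (hptop : p ≠ ∞) (hrq : r ≤ q)
    (hpconj : 1/p + 1/ptil = 1/r) (hqconj : 1/q + 1/qtil = 1/r) :
    ∃ C : ℝ, 0 < C ∧
      ∀ f g : ℝ × EuclideanSpace ℝ (Fin n) → ℝ, Measurable f → Measurable g →
        eLpNorm (fun w => f w * g w) r (volume.restrict (halfSpace n)) ≤
          ENNReal.ofReal C * eLp p (NLq n q f) volume * eLp ptil (CrLq n r qtil g) volume :=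
  stmt3_general n p ptil q qtil r hr1 hrtop hptop hpconj hqconj
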